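/- arXiv:1008.4167 — 2 statements merged into one kernel-verified Lean document; each statement's English description precedes it below -/
import Mathlib

section
/- Let n ≥ 4. Then B(ρ^R) = B(τ^C) = n − 2, and B(ρ^{RC}) = B(τ) = (n − 2 + √((n−2)² + 4))/2. -/
/-- The shift map iterated `k` times: `(shift k w) i = w (i + k)`,
so `shift k w = w_k w_{k+1} w_{k+2} …`. -/
def shift (k : ℕ) (w : ℕ → ℕ) : ℕ → ℕ := fun i => w (i + k)

/-- Strict lexicographic order on infinite words: `v < w` iff there is an index `i`
with `v j = w j` for all `j < i` and `v i < w i`. -/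
def LexLt (v w : ℕ → ℕ) : Prop := ∃ i, (∀ j < i, v j = w j) ∧ v i < w i

/-- Weak lexicographic order: `v ≤ w` iff `v < w` or `v = w`. -/
def LexLe (v w : ℕ → ℕ) : Prop := LexLt v w ∨ v = w

/-- A word is a bounded sequence of natural numbers. -/
def IsWord (w : ℕ → ℕ) : Prop := ∃ M, ∀ i, w i ≤ M

/-- `fword w β = ∑_{i ≥ 0} w_i β^{-(i+1)} = w_0/β + w_1/β² + …`. -/
noncomputable def fword (w : ℕ → ℕ) (β : ℝ) : ℝ := ∑' i : ℕ, (w i : ℝ) / β ^ (i + 1)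

open Classical in
/-- `B̂(w)`: zero for the zero word, and otherwise `inf {β > 1 : f_w(β) ≤ 1}`. -/
noncomputable def Bhat (w : ℕ → ℕ) : ℝ :=
  if w = fun _ => 0 then 0 else sInf {β : ℝ | 1 < β ∧ fword w β ≤ 1}

/-- `B̄(w) = sup_{j ≥ 0} B̂(σ^j w)`. -/
noncomputable def Bbar (w : ℕ → ℕ) : ℝ := ⨆ j : ℕ, Bhat (shift j w)

/-- The sequence `A_i` in the β-expansion of `β`: `A_0 = β`, `A_{i+1} = β (A_i - ⌊A_i⌋)`. -/
noncomputable def betaA (β : ℝ) : ℕ → ℝ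
  | 0 => β
  | i + 1 => β * (betaA β i - (⌊betaA β i⌋₊ : ℝ))

/-- The β-expansion of `β`: the word `a` with `a_i = ⌊A_i⌋`. -/
noncomputable def betaExp (β : ℝ) : ℕ → ℕ := fun i => ⌊betaA β i⌋₊

/-- The domain `W(β)` of the β-shift: all words `w` with `σ^k w < a` lexicographically
for every `k ≥ 0`, where `a` is the β-expansion of `β`. -/
def Wset (β : ℝ) : Set (ℕ → ℕ) :=
  {w | IsWord w ∧ ∀ k : ℕ, LexLt (shift k w) (betaExp β)}

/-- `π` is a permutation of `{1, …, n}` (viewed as a map `ℕ → ℕ`). -/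
def IsPerm (n : ℕ) (π : ℕ → ℕ) : Prop := Set.BijOn π (Set.Icc 1 n) (Set.Icc 1 n)

/-- The word `w` induces the permutation `π` of `{1, …, n}`: for all `1 ≤ i, j ≤ n`,
`π(i) < π(j)` iff `σ^{i-1} w < σ^{j-1} w` lexicographically. -/
def Induces (n : ℕ) (w : ℕ → ℕ) (π : ℕ → ℕ) : Prop :=
  ∀ i ∈ Set.Icc 1 n, ∀ j ∈ Set.Icc 1 n,
    (π i < π j ↔ LexLt (shift (i - 1) w) (shift (j - 1) w))

/-- `π ∈ Al(Σ_β)`: some word in `W(β)` induces `π`. -/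
def Allowed (β : ℝ) (n : ℕ) (π : ℕ → ℕ) : Prop := ∃ w ∈ Wset β, Induces n w π

/-- The shift-complexity `B(π) = inf {β > 1 : π ∈ Al(Σ_β)}`. -/
noncomputable def Bperm (n : ℕ) (π : ℕ → ℕ) : ℝ :=
  sInf {β : ℝ | 1 < β ∧ Allowed β n π}

/-- `ρ_m` is the permutation `1 m 2 (m-1) 3 (m-2) …` of `{1, …, m}`:
`ρ(2i-1) = i` and `ρ(2i) = m+1-i`. -/
def IsRho (m : ℕ) (ρ : ℕ → ℕ) : Prop :=
  IsPerm m ρ ∧ (∀ i, 1 ≤ i → 2 * i - 1 ≤ m → ρ (2 * i - 1) = i) ∧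
    (∀ i, 1 ≤ i → 2 * i ≤ m → ρ (2 * i) = m + 1 - i)

/-- `τ ∈ S_n` as defined in the paper: for even `n` with `s = n/2`, `τ(1) = s+1`,
`τ(2j) = s+1+j` and `τ(2j+1) = s+1-j` for `1 ≤ j ≤ s-1`, and `τ(n) = 1`; for odd `n` with
`s = (n+1)/2`, `τ(1) = s+1`, `τ(2j) = s+1-j` for `1 ≤ j ≤ s-1`, `τ(2j+1) = s+1+j` for
`1 ≤ j ≤ s-2`, and `τ(n) = 1`. -/
def IsTau (n : ℕ) (τ : ℕ → ℕ) : Prop :=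
  IsPerm n τ ∧
    ((n % 2 = 0 ∧ τ 1 = n / 2 + 1 ∧
        (∀ j, 1 ≤ j → j ≤ n / 2 - 1 → τ (2 * j) = n / 2 + 1 + j ∧
          τ (2 * j + 1) = n / 2 + 1 - j) ∧
        τ n = 1) ∨
      (n % 2 = 1 ∧ τ 1 = (n + 1) / 2 + 1 ∧
        (∀ j, 1 ≤ j → j ≤ (n + 1) / 2 - 1 → τ (2 * j) = (n + 1) / 2 + 1 - j) ∧
        (∀ j, 1 ≤ j → j ≤ (n + 1) / 2 - 2 → τ (2 * j + 1) = (n + 1) / 2 + 1 + j) ∧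
        τ n = 1))

/-!
If `π i < π j` but `π (i + 1) > π (j + 1)`, a word inducing `π` has `w (i - 1) < w (j - 1)`.
For each of the four permutations such descents link up along a zigzag of positions, so the
digits climb by one at every step; this yields a digit `≥ n - 2`, hence `⌊β⌋ ≥ n - 2`, directly
for `ρ^R` and `ρ^{RC}`, and for `τ^C` and `τ` after using the patterns forbidden in `W(β)`: a
suffix starting with the top digit `⌊β⌋` is never smaller than the next suffix, and one starting
with `0` is never larger. For `ρ^{RC}` and `τ` these patterns also force the second digit of the
β-expansion to be positive when `⌊β⌋ = n - 2`, that is `β (β - (n - 2)) ≥ 1`, which is exactly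
`β ≥ (n - 2 + √((n - 2)² + 4)) / 2`. Conversely, above each bound an explicit word induces the
permutation: the digits `π q - 1` or `π q - 2` on an initial segment, followed by a short tail
made of the top digit, `0` and `1`.
-/

open Set

theorem shift_apply (k : ℕ) (w : ℕ → ℕ) (i : ℕ) : shift k w i = w (i + k) := rfl

theorem shift_one_shift (k : ℕ) (w : ℕ → ℕ) : shift 1 (shift k w) = shift (k + 1) w := by
  funext i; simp only [shift_apply]; congr 1; omega

namespace LexLt

theorem irrefl (v : ℕ → ℕ) : ¬ LexLt v v := fun ⟨_, _, h⟩ => lt_irrefl _ h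

theorem asymm {v w : ℕ → ℕ} (h : LexLt v w) : ¬ LexLt w v := by
  rintro ⟨i, he, hi⟩
  obtain ⟨i', he', hi'⟩ := h
  rcases lt_trichotomy i i' with hc | rfl | hc
  · have := he' i hc; omega
  · omega
  · have := he i' hc; omega

theorem head_le {v w : ℕ → ℕ} (h : LexLt v w) : v 0 ≤ w 0 := by
  obtain ⟨i, he, hi⟩ := h
  rcases Nat.eq_zero_or_pos i with rfl | hpos
  · exact hi.le
  · exact (he 0 hpos).le

theorem shift_one {v w : ℕ → ℕ} (h : LexLt v w) (h0 : v 0 = w 0) :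
    LexLt (shift 1 v) (shift 1 w) := by
  obtain ⟨_ | i, he, hi⟩ := h
  · omega
  · exact ⟨i, fun j hj => he (j + 1) (by omega), hi⟩

end LexLt

theorem lexLt_of_head_lt {v w : ℕ → ℕ} (h : v 0 < w 0) : LexLt v w := ⟨0, by omega, h⟩

theorem lexLt_of_head_eq {v w : ℕ → ℕ} (h0 : v 0 = w 0) (h : LexLt (shift 1 v) (shift 1 w)) :
    LexLt v w := by
  obtain ⟨i, he, hi⟩ := h
  refine ⟨i + 1, fun j hj => ?_, hi⟩
  rcases j with _ | j
  · exact h0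
  · exact he j (by omega)

theorem lexLt_of_le_of_exists_lt {v w : ℕ → ℕ} (hle : ∀ i, v i ≤ w i) (hlt : ∃ t, v t < w t) :
    LexLt v w := by
  classical
  exact ⟨Nat.find hlt, fun j hj => (hle j).antisymm (not_lt.mp (Nat.find_min hlt hj)),
    Nat.find_spec hlt⟩

theorem lexLt_shift_of_lt_or {w : ℕ → ℕ} {a b : ℕ}
    (h : w a < w b ∨ w a = w b ∧ w (a + 1) < w (b + 1)) : LexLt (shift a w) (shift b w) := by
  rcases h with h | ⟨h0, h1⟩
  · exact lexLt_of_head_lt (by simpa [shift_apply] using h)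
  · refine lexLt_of_head_eq (by simpa [shift_apply] using h0) (lexLt_of_head_lt ?_)
    simpa [shift_apply, add_comm] using h1

theorem apply_add_eq_apply_mod {w : ℕ → ℕ} {k p i : ℕ}
    (h : ∀ j < i, w (j + k) = w (j + k + p)) : ∀ j < i + p, w (k + j) = w (k + j % p) := by
  intro j hj
  induction j using Nat.strong_induction_on with
  | _ j ih =>
    rcases Nat.lt_or_ge j p with hjp | hjp
    · rw [Nat.mod_eq_of_lt hjp]
    · obtain ⟨j, rfl⟩ := Nat.exists_eq_add_of_le' hjp
      rcases p.eq_zero_or_pos with rfl | hp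
      · rw [Nat.mod_zero]
      calc w (k + (j + p)) = w (j + k) := by rw [h j (by omega)]; congr 1; omega
        _ = w (k + j % p) := by rw [add_comm j k, ih j (by omega) (by omega)]
        _ = w (k + (j + p) % p) := by rw [Nat.add_mod_right]

theorem betaExp_zero (β : ℝ) : betaExp β 0 = ⌊β⌋₊ := rfl

theorem betaA_succ (β : ℝ) (i : ℕ) : betaA β (i + 1) = β * (betaA β i - betaExp β i) := rfl

theorem betaA_le {β : ℝ} (hβ : 0 < β) (i : ℕ) : betaA β i ≤ β := by
  cases i with
  | zero => exact le_rfl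
  | succ i =>
    rw [betaA_succ]
    have : betaA β i - betaExp β i < 1 := by
      have := Nat.lt_floor_add_one (betaA β i); unfold betaExp; linarith
    nlinarith

theorem exists_betaExp_pos {β : ℝ} (hβ : 1 < β) {m : ℕ} (hm : 0 < betaA β m) :
    ∃ t, m ≤ t ∧ 0 < betaExp β t := by
  by_contra! hzero
  have hgrow : ∀ t, betaA β (m + t) = β ^ t * betaA β m := by
    intro t
    induction t with
    | zero => simp
    | succ t ih =>
      rw [← add_assoc, betaA_succ, ih, Nat.eq_zero_of_le_zero (hzero (m + t) (by omega))]
      ring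
  obtain ⟨t, ht⟩ := pow_unbounded_of_one_lt (β / betaA β m) hβ
  have hle : β ^ t * betaA β m ≤ β := hgrow t ▸ betaA_le (by linarith) (m + t)
  rw [← le_div_iff₀ hm] at hle
  linarith

theorem lexLt_betaExp_of_eq_zero {β : ℝ} (hβ : 1 < β) {v : ℕ → ℕ} {m : ℕ}
    (hm : 0 < betaA β m) (hhead : ∀ i < m, v i = betaExp β i) (hzero : ∀ i, m ≤ i → v i = 0) :
    LexLt v (betaExp β) := by
  obtain ⟨t, hmt, ht⟩ := exists_betaExp_pos hβ hm
  refine lexLt_of_le_of_exists_lt (fun i => ?_) ⟨t, by rwa [hzero t hmt]⟩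
  rcases Nat.lt_or_ge i m with h | h
  · exact (hhead i h).le
  · rw [hzero i h]; exact Nat.zero_le _

theorem betaA_one (β : ℝ) : betaA β 1 = β * (β - ⌊β⌋₊) := rfl

theorem lexLt_betaExp_of_one_lt_betaA_one {β : ℝ} (hβ : 1 < β) (hA : 1 < betaA β 1)
    {v : ℕ → ℕ} (h0 : v 0 = betaExp β 0) (h1 : v 1 = 1) (hzero : ∀ i, 2 ≤ i → v i = 0) :
    LexLt v (betaExp β) := by
  have ha1 : 1 ≤ betaExp β 1 := (Nat.one_le_floor_iff _).mpr hA.le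
  rcases ha1.lt_or_eq with ha1 | ha1
  · exact lexLt_of_head_eq h0 (lexLt_of_head_lt (by simpa [shift_apply, h1] using ha1))
  · have hA2 : 0 < betaA β 2 := by
      rw [betaA_succ, ← ha1, Nat.cast_one]
      exact mul_pos (by linarith) (by linarith)
    refine lexLt_betaExp_of_eq_zero hβ hA2 (fun i hi => ?_) hzero
    interval_cases i
    · exact h0
    · rw [h1]; exact ha1

namespace Wset

variable {β : ℝ} {w : ℕ → ℕ}

theorem le_betaExp_zero (hw : w ∈ Wset β) (k : ℕ) : w k ≤ betaExp β 0 := by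
  simpa [shift_apply] using (hw.2 k).head_le

theorem le_betaExp_one (hw : w ∈ Wset β) {k : ℕ} (h : w k = betaExp β 0) :
    w (k + 1) ≤ betaExp β 1 := by
  have := ((hw.2 k).shift_one (by simpa [shift_apply] using h)).head_le
  simpa [shift_one_shift, shift_apply, add_comm] using this

theorem not_lexLt_shift_succ (hw : w ∈ Wset β) {k : ℕ} (h : w k = betaExp β 0) :
    ¬ LexLt (shift k w) (shift (k + 1) w) := by
  rintro ⟨i, he, hi⟩
  have hconst := apply_add_eq_apply_mod (p := 1) he i (by omega)
  rw [Nat.mod_one, add_zero, h, add_comm] at hconst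
  have := le_betaExp_zero hw (i + (k + 1))
  simp only [shift_apply] at hi
  omega

theorem not_lexLt_shift_two (hw : w ∈ Wset β) {k : ℕ} (h0 : w k = betaExp β 0)
    (h1 : w (k + 1) = betaExp β 1) : ¬ LexLt (shift k w) (shift (k + 2) w) := by
  rintro ⟨i, he, hi⟩
  have hper := apply_add_eq_apply_mod (p := 2) he
  simp only [shift_apply] at hi
  rcases Nat.mod_two_eq_zero_or_one i with hi2 | hi2
  · have := hper i (by omega)
    rw [hi2, add_zero, h0, add_comm] at this
    have := le_betaExp_zero hw (i + (k + 2))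
    omega
  · have hi' := hper i (by omega)
    have hi1 := hper (i + 1) (by omega)
    rw [hi2, h1, add_comm] at hi'
    rw [show (i + 1) % 2 = 0 by omega, add_zero, h0, ← add_assoc, add_comm k i] at hi1
    have := le_betaExp_one hw hi1
    rw [show i + k + 1 + 1 = i + (k + 2) by omega] at this
    omega

end Wset

theorem not_lexLt_shift_succ_of_eq_zero {w : ℕ → ℕ} {k : ℕ} (h : w k = 0) :
    ¬ LexLt (shift (k + 1) w) (shift k w) := by
  rintro ⟨i, he, hi⟩
  have hconst := apply_add_eq_apply_mod (p := 1) (fun j hj => (he j hj).symm) i (by omega)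
  rw [Nat.mod_one, add_zero, h, add_comm] at hconst
  simp only [shift_apply] at hi
  omega

theorem mem_Wset_of_le {β : ℝ} {w : ℕ → ℕ} {m : ℕ} (hle : ∀ i, w i ≤ m) (hm : m ≤ ⌊β⌋₊)
    (hmax : ⌊β⌋₊ = m → ∀ k, w k = m → LexLt (shift k w) (betaExp β)) : w ∈ Wset β := by
  refine ⟨⟨m, hle⟩, fun k => ?_⟩
  by_cases hk : w k < ⌊β⌋₊
  · exact lexLt_of_head_lt (by simpa [shift_apply, betaExp_zero] using hk)
  · have := hle k
    exact hmax (by omega) k (by omega)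

namespace Induces

variable {n : ℕ} {w π : ℕ → ℕ}

theorem congr {π' : ℕ → ℕ} (h : Induces n w π) (hπ : EqOn π π' (Icc 1 n)) :
    Induces n w π' := by
  intro i hi j hj
  rw [← hπ hi, ← hπ hj]
  exact h i hi j hj

theorem head_le (h : Induces n w π) {i j : ℕ} (hi : i ∈ Icc 1 n) (hj : j ∈ Icc 1 n)
    (hlt : π i < π j) : w (i - 1) ≤ w (j - 1) := by
  simpa [shift_apply] using ((h i hi j hj).1 hlt).head_le

theorem lexLt_shift (h : Induces n w π) {i j : ℕ} (hi : i ∈ Icc 1 n) (hj : j ∈ Icc 1 n)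
    (hlt : π i < π j) (heq : w (i - 1) = w (j - 1)) : LexLt (shift i w) (shift j w) := by
  have := ((h i hi j hj).1 hlt).shift_one (by simpa [shift_apply] using heq)
  rwa [shift_one_shift, shift_one_shift, Nat.sub_add_cancel hi.1, Nat.sub_add_cancel hj.1]
    at this

/-- Equal first letters would carry the order of the suffixes at `i`, `j` over to `i + 1`,
`j + 1`. -/
theorem head_lt (h : Induces n w π) {i j : ℕ} (hi : i ∈ Icc 1 (n - 1)) (hj : j ∈ Icc 1 (n - 1))
    (hlt : π i < π j) (hdesc : π (j + 1) ≤ π (i + 1)) : w (i - 1) < w (j - 1) := by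
  rw [mem_Icc] at hi hj
  have hi' : i ∈ Icc 1 n := ⟨hi.1, by omega⟩
  have hj' : j ∈ Icc 1 n := ⟨hj.1, by omega⟩
  refine lt_of_le_of_ne (h.head_le hi' hj' hlt) fun heq => ?_
  have := (h (i + 1) ⟨by omega, by omega⟩ (j + 1) ⟨by omega, by omega⟩).2
    (by simpa using h.lexLt_shift hi' hj' hlt heq)
  omega

theorem add_le_of_chain (h : Induces n w π) (g : ℕ → ℕ) (K : ℕ)
    (hg : ∀ k < K, g k ∈ Icc 1 (n - 1) ∧ g (k + 1) ∈ Icc 1 (n - 1) ∧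
      π (g k) < π (g (k + 1)) ∧ π (g (k + 1) + 1) ≤ π (g k + 1)) :
    w (g 0 - 1) + K ≤ w (g K - 1) := by
  induction K with
  | zero => omega
  | succ K ih =>
    obtain ⟨h1, h2, h3, h4⟩ := hg K (by omega)
    have := h.head_lt h1 h2 h3 h4
    have := ih fun k hk => hg k (by omega)
    omega

end Induces

theorem induces_of_lexLt {n : ℕ} {w π : ℕ → ℕ} (hinj : InjOn π (Icc 1 n))
    (H : ∀ i ∈ Icc 1 n, ∀ j ∈ Icc 1 n, π i < π j → LexLt (shift (i - 1) w) (shift (j - 1) w)) :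
    Induces n w π := by
  refine fun i hi j hj => ⟨H i hi j hj, fun hlex => ?_⟩
  rcases lt_trichotomy (π i) (π j) with hc | hc | hc
  · exact hc
  · exact absurd (hinj hi hj hc ▸ hlex) (LexLt.irrefl _)
  · exact absurd (H j hj i hi hc) hlex.asymm

theorem induces_of_two_letters {n : ℕ} {w π : ℕ → ℕ} (hinj : InjOn π (Icc 1 n))
    (H : ∀ i ∈ Icc 1 n, ∀ j ∈ Icc 1 n, π i < π j →
      w (i - 1) < w (j - 1) ∨ w (i - 1) = w (j - 1) ∧ w i < w j) :
    Induces n w π :=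
  induces_of_lexLt hinj fun i hi j hj hlt => lexLt_shift_of_lt_or <| by
    rw [Nat.sub_add_cancel hi.1, Nat.sub_add_cancel hj.1]; exact H i hi j hj hlt

/-- The order in which the zigzag visits `1, …, c + 1`: `c, c - 2, …` down to `1` or `2`,
then up through the positions of the other parity. -/
def zigzag (c k : ℕ) : ℕ := if 2 * k < c then c - 2 * k else 2 * k + 1 - c

/-- Along the zigzag the permutations below take consecutive values while the values one
position to the right decrease, so every step is a descent. -/
theorem Induces.add_le_zigzag {n : ℕ} {w π : ℕ → ℕ} (h : Induces n w π) {c K a b : ℕ}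
    (hc : c ≤ n - 1) (hK : K ≤ c) (hKn : K + 2 ≤ n)
    (hzig : ∀ k ≤ K, π (zigzag c k) = a + k ∧
      π (zigzag c k + 1) = if 2 * k < c then b - k else b - 1 - k) :
    w (c - 1) + K ≤ w (zigzag c K - 1) := by
  have h0 : zigzag c 0 - 1 = c - 1 := by unfold zigzag; split_ifs <;> omega
  rw [← h0]
  refine h.add_le_of_chain (zigzag c) K fun k hk => ⟨?_, ?_, ?_, ?_⟩
  · unfold zigzag; simp only [mem_Icc]; split_ifs <;> omega
  · unfold zigzag; simp only [mem_Icc]; split_ifs <;> omega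
  · rw [(hzig k hk.le).1, (hzig (k + 1) hk).1]; omega
  · rw [(hzig k hk.le).2, (hzig (k + 1) hk).2]; split_ifs <;> omega

theorem Bperm_congr {n : ℕ} {π π' : ℕ → ℕ} (hπ : EqOn π π' (Icc 1 n)) :
    Bperm n π = Bperm n π' := by
  have key : ∀ β, Allowed β n π ↔ Allowed β n π' := fun β =>
    ⟨fun ⟨w, hw, h⟩ => ⟨w, hw, h.congr hπ⟩, fun ⟨w, hw, h⟩ => ⟨w, hw, h.congr hπ.symm⟩⟩
  simp only [Bperm, key]

theorem Bperm_eq_of_forall {n : ℕ} {π : ℕ → ℕ} {c : ℝ} (hc : 1 ≤ c)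
    (hlb : ∀ β, 1 < β → Allowed β n π → c ≤ β) (hub : ∀ β, c < β → Allowed β n π) :
    Bperm n π = c := by
  refine csInf_eq_of_forall_ge_of_forall_gt_exists_lt ⟨c + 1, by linarith, hub _ (by linarith)⟩
    (fun β hβ => hlb β hβ.1 hβ.2) fun β hβ => ⟨(c + β) / 2, ⟨by linarith, hub _ ?_⟩, ?_⟩ <;>
    linarith

/-- The positive root of `x ^ 2 - c x - 1`. -/
noncomputable def metallicMean (c : ℝ) : ℝ := (c + Real.sqrt (c ^ 2 + 4)) / 2

theorem mul_sub_sub_one_eq_sub_metallicMean_mul (c β : ℝ) :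
    β * (β - c) - 1 = (β - metallicMean c) * (β - (c - Real.sqrt (c ^ 2 + 4)) / 2) := by
  have := Real.sq_sqrt (by positivity : 0 ≤ c ^ 2 + 4)
  unfold metallicMean
  linear_combination (1 / 4) * this

theorem lt_sqrt_sq_add_four (c : ℝ) : c < Real.sqrt (c ^ 2 + 4) := by
  have := Real.sq_sqrt (by positivity : 0 ≤ c ^ 2 + 4)
  nlinarith [Real.sqrt_nonneg (c ^ 2 + 4)]

theorem metallicMean_le_iff {c β : ℝ} (hβ : 0 ≤ β) :
    metallicMean c ≤ β ↔ 1 ≤ β * (β - c) := by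
  have hpos : 0 < β - (c - Real.sqrt (c ^ 2 + 4)) / 2 := by
    linarith [lt_sqrt_sq_add_four c]
  rw [← sub_nonneg, ← sub_nonneg (b := (1 : ℝ)), mul_sub_sub_one_eq_sub_metallicMean_mul,
    mul_nonneg_iff_of_pos_right hpos]

theorem metallicMean_lt_iff {c β : ℝ} (hβ : 0 ≤ β) :
    metallicMean c < β ↔ 1 < β * (β - c) := by
  have hpos : 0 < β - (c - Real.sqrt (c ^ 2 + 4)) / 2 := by
    linarith [lt_sqrt_sq_add_four c]
  rw [← sub_pos, ← sub_pos (b := (1 : ℝ)), mul_sub_sub_one_eq_sub_metallicMean_mul,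
    mul_pos_iff_of_pos_right hpos]

theorem lt_metallicMean (c : ℝ) : c < metallicMean c := by
  unfold metallicMean; linarith [lt_sqrt_sq_add_four c]

theorem metallicMean_le_of_le_floor {β : ℝ} {m : ℕ} (hm : 0 < m) (hfl : m ≤ ⌊β⌋₊)
    (h1 : ⌊β⌋₊ = m → 1 ≤ betaExp β 1) : metallicMean m ≤ β := by
  have hβ : 0 < β := by have := Nat.floor_pos.mp (hm.trans_le hfl); linarith
  rcases hfl.lt_or_eq with hfl | hfl
  · have : ((m + 1 : ℕ) : ℝ) ≤ β := (Nat.le_floor_iff hβ.le).mp hfl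
    have hm' : (0 : ℝ) < m := Nat.cast_pos.mpr hm
    push_cast at this
    exact ((metallicMean_lt_iff (by positivity)).mpr (by nlinarith)).le.trans this
  · have : 1 ≤ betaA β 1 := (Nat.one_le_floor_iff _).mp (h1 hfl.symm)
    rw [metallicMean_le_iff hβ.le]
    rwa [betaA_one, ← hfl] at this

theorem betaA_one_pos {β : ℝ} (hβ : 0 < β) (h : (⌊β⌋₊ : ℝ) < β) : 0 < betaA β 1 := by
  rw [betaA_one]; exact mul_pos hβ (by linarith)

theorem one_lt_betaA_one {β : ℝ} {m : ℕ} (hβ : metallicMean m < β) (h : ⌊β⌋₊ = m) :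
    1 < betaA β 1 := by
  have : 0 ≤ β := (Nat.cast_nonneg m).trans ((lt_metallicMean (m : ℝ)).le.trans hβ.le)
  rw [betaA_one, h]; exact (metallicMean_lt_iff this).mp hβ

theorem cast_sub_two {n : ℕ} (hn : 2 ≤ n) : ((n - 2 : ℕ) : ℝ) = n - 2 := by
  push_cast [Nat.cast_sub hn]; ring

theorem sub_two_le_iff_le_floor {n : ℕ} {β : ℝ} (hn : 3 ≤ n) :
    (n : ℝ) - 2 ≤ β ↔ n - 2 ≤ ⌊β⌋₊ := by
  rw [Nat.le_floor_iff' (by omega), cast_sub_two (by omega)]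

def rhoFun (n q : ℕ) : ℕ := if q % 2 = 1 then (q + 1) / 2 else n + 1 - q / 2

def tauFun (n q : ℕ) : ℕ :=
  if q = n then 1
  else if n % 2 = 0 then (if q % 2 = 0 then n / 2 + 1 + q / 2 else n / 2 + 1 - q / 2)
  else if q % 2 = 0 then (n + 1) / 2 + 1 - q / 2 else (n + 1) / 2 + 1 + q / 2

theorem IsRho.eqOn {n : ℕ} {ρ : ℕ → ℕ} (hρ : IsRho n ρ) : EqOn ρ (rhoFun n) (Icc 1 n) := by
  rintro q ⟨hq1, hqn⟩
  unfold rhoFun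
  split_ifs with hq
  · have := hρ.2.1 ((q + 1) / 2) (by omega) (by omega)
    rwa [show 2 * ((q + 1) / 2) - 1 = q by omega] at this
  · have := hρ.2.2 (q / 2) (by omega) (by omega)
    rwa [show 2 * (q / 2) = q by omega] at this

theorem IsTau.eqOn {n : ℕ} {τ : ℕ → ℕ} (hτ : IsTau n τ) : EqOn τ (tauFun n) (Icc 1 n) := by
  rintro q ⟨hq1, hqn⟩
  rcases hqn.lt_or_eq with hqn | rfl
  · obtain ⟨j, rfl | rfl⟩ := Nat.even_or_odd' q
    · rcases hτ.2 with ⟨hp, -, h2, -⟩ | ⟨hp, -, h2, -⟩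
      · rw [(h2 j (by omega) (by omega)).1]
        unfold tauFun; split_ifs <;> omega
      · rw [h2 j (by omega) (by omega)]
        unfold tauFun; split_ifs <;> omega
    · rcases j.eq_zero_or_pos with rfl | hj
      · rcases hτ.2 with ⟨hp, h1, -⟩ | ⟨hp, h1, -⟩ <;>
          (rw [h1]; unfold tauFun; split_ifs <;> omega)
      · rcases hτ.2 with ⟨hp, -, h2, -⟩ | ⟨hp, -, -, h3, -⟩
        · rw [(h2 j (by omega) (by omega)).2]
          unfold tauFun; split_ifs <;> omega
        · rw [h3 j (by omega) (by omega)]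
          unfold tauFun; split_ifs <;> omega
  · rcases hτ.2 with ⟨-, -, -, h⟩ | ⟨-, -, -, -, h⟩ <;> simp [tauFun, h]

def rhoRev (n q : ℕ) : ℕ := rhoFun n (n + 1 - q)

def rhoRevCompl (n q : ℕ) : ℕ := n + 1 - rhoFun n (n + 1 - q)

def tauCompl (n q : ℕ) : ℕ := n + 1 - tauFun n q

theorem rhoRev_zigzag {n k : ℕ} (hn : 4 ≤ n) (hk : k ≤ n - 2) :
    rhoRev n (zigzag (n - 2) k) = 2 + k ∧
      rhoRev n (zigzag (n - 2) k + 1) = if 2 * k < n - 2 then n - k else n - 1 - k := by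
  unfold rhoRev rhoFun zigzag
  constructor <;> split_ifs <;> omega

theorem tauCompl_zigzag {n k : ℕ} (hn : 4 ≤ n) (hk : k ≤ n - 3) :
    tauCompl n (zigzag (n - 2) k) = 1 + k ∧
      tauCompl n (zigzag (n - 2) k + 1) = if 2 * k < n - 2 then n - 1 - k else n - 1 - 1 - k := by
  unfold tauCompl tauFun zigzag
  constructor <;> split_ifs <;> omega

theorem rhoRevCompl_zigzag {n k : ℕ} (hn : 4 ≤ n) (hk : k ≤ n - 2) :
    rhoRevCompl n (zigzag (n - 1) k) = 1 + k ∧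
      rhoRevCompl n (zigzag (n - 1) k + 1) = if 2 * k < n - 1 then n - k else n - 1 - k := by
  unfold rhoRevCompl rhoFun zigzag
  constructor <;> split_ifs <;> omega

theorem tauFun_zigzag {n k : ℕ} (hn : 4 ≤ n) (hk : k ≤ n - 3) :
    tauFun n (zigzag (n - 3) k) = 3 + k ∧
      tauFun n (zigzag (n - 3) k + 1) = if 2 * k < n - 3 then n - k else n - 1 - k := by
  unfold tauFun zigzag
  constructor <;> split_ifs <;> omega

theorem sub_two_le_of_allowed_rhoRev {n : ℕ} {β : ℝ} (hn : 4 ≤ n) (h : Allowed β n (rhoRev n)) :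
    (n : ℝ) - 2 ≤ β := by
  obtain ⟨w, hw, hInd⟩ := h
  have hchain : w (n - 3) + (n - 2) ≤ w (n - 2) := by
    have := hInd.add_le_zigzag (c := n - 2) (K := n - 2) (by omega) le_rfl (by omega)
      fun k hk => rhoRev_zigzag hn hk
    rwa [show zigzag (n - 2) (n - 2) - 1 = n - 2 by unfold zigzag; split_ifs <;> omega,
      show n - 2 - 1 = n - 3 by omega] at this
  have := Wset.le_betaExp_zero hw (n - 2)
  rw [sub_two_le_iff_le_floor (by omega), ← betaExp_zero]
  omega

theorem sub_two_le_of_allowed_tauCompl {n : ℕ} {β : ℝ} (hn : 4 ≤ n)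
    (h : Allowed β n (tauCompl n)) : (n : ℝ) - 2 ≤ β := by
  obtain ⟨w, hw, hInd⟩ := h
  have hchain : w (n - 3) + (n - 3) ≤ w (n - 4) := by
    have := hInd.add_le_zigzag (c := n - 2) (K := n - 3) (by omega) (by omega) (by omega)
      fun k hk => tauCompl_zigzag hn hk
    rwa [show zigzag (n - 2) (n - 3) - 1 = n - 4 by unfold zigzag; split_ifs <;> omega,
      show n - 2 - 1 = n - 3 by omega] at this
  obtain ⟨h3, h1, h0⟩ : tauCompl n (n - 3) = n - 2 ∧ tauCompl n (n - 1) = n - 1 ∧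
      tauCompl n n = n := by
    unfold tauCompl tauFun; refine ⟨?_, ?_, ?_⟩ <;> split_ifs <;> omega
  have hle₁ : w (n - 4) ≤ w (n - 2) := by
    simpa [Nat.sub_sub] using hInd.head_le (i := n - 3) (j := n - 1) ⟨by omega, by omega⟩
      ⟨by omega, by omega⟩ (by omega)
  have hle₂ : w (n - 2) ≤ w (n - 1) := by
    simpa [Nat.sub_sub] using hInd.head_le (i := n - 1) (j := n) ⟨by omega, by omega⟩
      ⟨by omega, le_rfl⟩ (by omega)
  rw [sub_two_le_iff_le_floor (by omega), ← betaExp_zero]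
  by_contra! hlt
  have := Wset.le_betaExp_zero hw (n - 1)
  -- `w (n - 2) = w (n - 1) = ⌊β⌋` while `σ^(n-1) w < σ^n w`
  refine Wset.not_lexLt_shift_succ hw (k := n - 1) (by omega) ?_
  rw [Nat.sub_add_cancel (by omega)]
  exact hInd.lexLt_shift ⟨by omega, by omega⟩ ⟨by omega, le_rfl⟩ (by omega)
    (by simp only [Nat.sub_sub, Nat.reduceAdd]; omega)

theorem metallicMean_le_of_allowed_rhoRevCompl {n : ℕ} {β : ℝ} (hn : 4 ≤ n)
    (h : Allowed β n (rhoRevCompl n)) : metallicMean ((n : ℝ) - 2) ≤ β := by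
  obtain ⟨w, hw, hInd⟩ := h
  have hchain : w (n - 2) + (n - 2) ≤ w (n - 3) := by
    have := hInd.add_le_zigzag (c := n - 1) (K := n - 2) (by omega) (by omega) (by omega)
      fun k hk => rhoRevCompl_zigzag hn hk
    rwa [show zigzag (n - 1) (n - 2) - 1 = n - 3 by unfold zigzag; split_ifs <;> omega,
      show n - 1 - 1 = n - 2 by omega] at this
  obtain ⟨h2, h0⟩ : rhoRevCompl n (n - 2) = n - 1 ∧ rhoRevCompl n n = n := by
    unfold rhoRevCompl rhoFun; constructor <;> split_ifs <;> omega
  have hfl : n - 2 ≤ ⌊β⌋₊ := by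
    have := Wset.le_betaExp_zero hw (n - 3); rw [betaExp_zero] at this; omega
  rw [← cast_sub_two (by omega)]
  refine metallicMean_le_of_le_floor (by omega) hfl fun hfl => ?_
  by_contra! ha1
  have hle : w (n - 3) ≤ w (n - 1) := by
    simpa [Nat.sub_sub] using hInd.head_le (i := n - 2) (j := n) ⟨by omega, by omega⟩
      ⟨by omega, le_rfl⟩ (by omega)
  have := Wset.le_betaExp_zero hw (n - 1)
  rw [betaExp_zero] at this
  have hmax : w (n - 1) = betaExp β 0 := by rw [betaExp_zero]; omega
  have := Wset.le_betaExp_one hw hmax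
  rw [Nat.sub_add_cancel (by omega)] at this
  -- `σ^(n-3) w < σ^(n-1) w` with equal first two letters, so `σ^(n-1) w < σ^(n+1) w`
  have hlex := hInd.lexLt_shift (i := n - 2) (j := n) ⟨by omega, by omega⟩ ⟨by omega, le_rfl⟩
    (by omega) (by simp only [Nat.sub_sub, Nat.reduceAdd]; omega)
  have := hlex.shift_one (by simp only [shift_apply, zero_add]; omega)
  rw [shift_one_shift, shift_one_shift, show n - 2 + 1 = n - 1 by omega] at this
  refine Wset.not_lexLt_shift_two hw hmax (by rw [Nat.sub_add_cancel (by omega)]; omega) ?_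
  rwa [show n - 1 + 2 = n + 1 by omega]

theorem metallicMean_le_of_allowed_tauFun {n : ℕ} {β : ℝ} (hn : 4 ≤ n)
    (h : Allowed β n (tauFun n)) : metallicMean ((n : ℝ) - 2) ≤ β := by
  obtain ⟨w, hw, hInd⟩ := h
  have hchain : w (n - 4) + (n - 3) ≤ w (n - 3) := by
    have := hInd.add_le_zigzag (c := n - 3) (K := n - 3) (by omega) le_rfl (by omega)
      fun k hk => tauFun_zigzag hn hk
    rwa [show zigzag (n - 3) (n - 3) - 1 = n - 3 by unfold zigzag; split_ifs <;> omega,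
      show n - 3 - 1 = n - 4 by omega] at this
  obtain ⟨h0, h1, h3⟩ : tauFun n n = 1 ∧ tauFun n (n - 1) = 2 ∧ tauFun n (n - 3) = 3 := by
    unfold tauFun; refine ⟨?_, ?_, ?_⟩ <;> split_ifs <;> omega
  have hle₁ : w (n - 1) ≤ w (n - 2) := by
    simpa [Nat.sub_sub] using hInd.head_le (i := n) (j := n - 1) ⟨by omega, le_rfl⟩
      ⟨by omega, by omega⟩ (by omega)
  have hle₂ : w (n - 2) ≤ w (n - 4) := by
    simpa [Nat.sub_sub] using hInd.head_le (i := n - 1) (j := n - 3) ⟨by omega, by omega⟩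
      ⟨by omega, by omega⟩ (by omega)
  have hpos : w (n - 2) ≠ 0 := fun hzero => by
    refine not_lexLt_shift_succ_of_eq_zero (w := w) (k := n - 1) (by omega) ?_
    rw [Nat.sub_add_cancel (by omega)]
    exact hInd.lexLt_shift ⟨by omega, le_rfl⟩ ⟨by omega, by omega⟩ (by omega)
      (by simp only [Nat.sub_sub, Nat.reduceAdd]; omega)
  have hd := Wset.le_betaExp_zero hw (n - 3)
  rw [betaExp_zero] at hd
  have hfl : n - 2 ≤ ⌊β⌋₊ := by omega
  rw [← cast_sub_two (by omega)]
  refine metallicMean_le_of_le_floor (by omega) hfl fun hfl => ?_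
  have := Wset.le_betaExp_one hw (k := n - 3) (by rw [betaExp_zero]; omega)
  rw [show n - 3 + 1 = n - 2 by omega] at this
  omega

-- The digit at `n - 1` is `rhoRev n n - 2 = 1 - 2 = 0` by truncated subtraction.
def rhoRevWord (n i : ℕ) : ℕ := if i < n then rhoRev n (i + 1) - 2 else 0

theorem rhoRev_injOn {n : ℕ} : InjOn (rhoRev n) (Icc 1 n) := by
  rintro a ⟨ha1, ha⟩ b ⟨hb1, hb⟩ hab
  unfold rhoRev rhoFun at hab
  split_ifs at hab <;> omega

theorem rhoRev_mem_Icc {n q : ℕ} (hq1 : 1 ≤ q) (hq : q ≤ n - 3) : rhoRev n q ∈ Icc 3 (n - 1) := by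
  unfold rhoRev rhoFun; simp only [mem_Icc]; split_ifs <;> constructor <;> omega

theorem rhoRevWord_mem_Wset {n : ℕ} {β : ℝ} (hn : 4 ≤ n) (hβ : (n : ℝ) - 2 < β) :
    rhoRevWord n ∈ Wset β := by
  have hn' : (4 : ℝ) ≤ n := by exact_mod_cast hn
  have hfl := (sub_two_le_iff_le_floor (by omega)).mp hβ.le
  refine mem_Wset_of_le (m := n - 2) (fun i => ?_) hfl fun hfl k hk => ?_
  · unfold rhoRevWord rhoRev rhoFun; split_ifs <;> omega
  have hk : k = n - 2 := by
    unfold rhoRevWord rhoRev rhoFun at hk; split_ifs at hk <;> omega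
  rw [hk]
  refine lexLt_betaExp_of_eq_zero (m := 1) (by linarith) (betaA_one_pos (by linarith) ?_)
    (fun i hi => ?_) fun i hi => ?_
  · rwa [hfl, cast_sub_two (by omega)]
  · rw [Nat.lt_one_iff.mp hi, shift_apply, zero_add, betaExp_zero, hfl]
    unfold rhoRevWord rhoRev rhoFun; split_ifs <;> omega
  · rw [shift_apply]; unfold rhoRevWord rhoRev rhoFun; split_ifs <;> omega

theorem rhoRevWord_cases {n q : ℕ} (hq : q ∈ Icc 1 n) :
    (q ≤ n - 3 ∧ 3 ≤ rhoRev n q ∧ rhoRev n q ≤ n - 1 ∧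
      rhoRevWord n (q - 1) = rhoRev n q - 2) ∨
    (q = n - 2 ∧ rhoRev n q = 2 ∧ rhoRevWord n (q - 1) = 0 ∧ rhoRevWord n q = n - 2) ∨
    (q = n - 1 ∧ rhoRev n q = n ∧ rhoRevWord n (q - 1) = n - 2) ∨
    (q = n ∧ rhoRev n q = 1 ∧ rhoRevWord n (q - 1) = 0 ∧ rhoRevWord n q = 0) := by
  obtain ⟨hq1, hqn⟩ := hq
  rcases (show q ≤ n - 3 ∨ q = n - 2 ∨ q = n - 1 ∨ q = n by omega) with hq | hq | hq | hq
  · have := rhoRev_mem_Icc hq1 hq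
    refine Or.inl ⟨hq, this.1, this.2, ?_⟩
    unfold rhoRevWord; rw [if_pos (by omega), Nat.sub_add_cancel hq1]
  all_goals rw [hq]; unfold rhoRevWord rhoRev rhoFun
  · exact Or.inr <| Or.inl ⟨rfl, by split_ifs <;> omega, by split_ifs <;> omega,
      by split_ifs <;> omega⟩
  · exact Or.inr <| Or.inr <| Or.inl ⟨rfl, by split_ifs <;> omega, by split_ifs <;> omega⟩
  · exact Or.inr <| Or.inr <| Or.inr ⟨rfl, by split_ifs <;> omega, by split_ifs <;> omega,
      by split_ifs <;> omega⟩

theorem rhoRevWord_induces {n : ℕ} (hn : 4 ≤ n) : Induces n (rhoRevWord n) (rhoRev n) :=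
  induces_of_two_letters rhoRev_injOn fun i hi j hj _ => by
    have := rhoRevWord_cases hi
    have := rhoRevWord_cases hj
    omega

def tauComplWord (n i : ℕ) : ℕ :=
  if i < n - 2 then tauCompl n (i + 1) - 1 else if i = n - 2 then n - 3
  else if i = n - 1 then n - 2 else 0

theorem tauCompl_injOn {n : ℕ} : InjOn (tauCompl n) (Icc 1 n) := by
  rintro a ⟨ha1, ha⟩ b ⟨hb1, hb⟩ hab
  unfold tauCompl tauFun at hab
  split_ifs at hab <;> omega

theorem tauCompl_mem_Icc {n q : ℕ} (hq1 : 1 ≤ q) (hq : q ≤ n - 2) :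
    tauCompl n q ∈ Icc 1 (n - 2) := by
  unfold tauCompl tauFun; simp only [mem_Icc]; split_ifs <;> constructor <;> omega

theorem tauComplWord_le {n : ℕ} (i : ℕ) (hi : i ≠ n - 1) : tauComplWord n i ≤ n - 3 := by
  unfold tauComplWord
  split_ifs with h
  · have := (tauCompl_mem_Icc (n := n) (q := i + 1) (by omega) (by omega)).2; omega
  all_goals omega

theorem tauComplWord_mem_Wset {n : ℕ} {β : ℝ} (hn : 4 ≤ n) (hβ : (n : ℝ) - 2 < β) :
    tauComplWord n ∈ Wset β := by
  have hn' : (4 : ℝ) ≤ n := by exact_mod_cast hn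
  have hfl := (sub_two_le_iff_le_floor (by omega)).mp hβ.le
  have hmax : tauComplWord n (n - 1) = n - 2 := by unfold tauComplWord; split_ifs <;> omega
  refine mem_Wset_of_le (m := n - 2) (fun i => ?_) hfl fun hfl k hk => ?_
  · rcases eq_or_ne i (n - 1) with rfl | hi
    · exact hmax.le
    · have := tauComplWord_le i hi; omega
  have hk : k = n - 1 := by
    by_contra hk'; have := tauComplWord_le k hk'; omega
  rw [hk]
  refine lexLt_betaExp_of_eq_zero (m := 1) (by linarith) (betaA_one_pos (by linarith) ?_)
    (fun i hi => ?_) fun i hi => ?_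
  · rwa [hfl, cast_sub_two (by omega)]
  · rw [Nat.lt_one_iff.mp hi, shift_apply, zero_add, betaExp_zero, hfl, hmax]
  · rw [shift_apply]; unfold tauComplWord; split_ifs <;> omega

theorem tauComplWord_cases {n q : ℕ} (hq : q ∈ Icc 1 n) :
    (q ≤ n - 2 ∧ 1 ≤ tauCompl n q ∧ tauCompl n q ≤ n - 2 ∧
      tauComplWord n (q - 1) = tauCompl n q - 1 ∧ tauComplWord n q ≤ n - 3) ∨
    (q = n - 1 ∧ tauCompl n q = n - 1 ∧ tauComplWord n (q - 1) = n - 3 ∧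
      tauComplWord n q = n - 2) ∨
    (q = n ∧ tauCompl n q = n ∧ tauComplWord n (q - 1) = n - 2) := by
  obtain ⟨hq1, hqn⟩ := hq
  rcases (show q ≤ n - 2 ∨ q = n - 1 ∨ q = n by omega) with hq | hq | hq
  · have := tauCompl_mem_Icc hq1 hq
    refine Or.inl ⟨hq, this.1, this.2, ?_, tauComplWord_le q (by omega)⟩
    unfold tauComplWord; rw [if_pos (by omega), Nat.sub_add_cancel hq1]
  all_goals rw [hq]; unfold tauComplWord tauCompl tauFun
  · exact Or.inr <| Or.inl ⟨rfl, by split_ifs <;> omega, by split_ifs <;> omega,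
      by split_ifs <;> omega⟩
  · exact Or.inr <| Or.inr ⟨rfl, by split_ifs <;> omega, by split_ifs <;> omega⟩

theorem tauComplWord_induces {n : ℕ} (hn : 4 ≤ n) :
    Induces n (tauComplWord n) (tauCompl n) :=
  induces_of_two_letters tauCompl_injOn fun i hi j hj _ => by
    have := tauComplWord_cases hi
    have := tauComplWord_cases hj
    omega

def rhoRevComplWord (n i : ℕ) : ℕ :=
  if i < n - 3 then rhoRevCompl n (i + 1) - 1
  else if i = n - 3 ∨ i = n - 1 ∨ i = n + 1 then n - 2
  else if i = n + 2 then 1 else 0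

theorem rhoRevCompl_injOn {n : ℕ} : InjOn (rhoRevCompl n) (Icc 1 n) := by
  rintro a ⟨ha1, ha⟩ b ⟨hb1, hb⟩ hab
  unfold rhoRevCompl rhoFun at hab
  split_ifs at hab <;> omega

theorem rhoRevCompl_mem_Icc {n q : ℕ} (hq1 : 1 ≤ q) (hq : q ≤ n - 3) :
    rhoRevCompl n q ∈ Icc 2 (n - 2) := by
  unfold rhoRevCompl rhoFun; simp only [mem_Icc]; split_ifs <;> constructor <;> omega

theorem rhoRevComplWord_le {n : ℕ} (hn : 4 ≤ n) (i : ℕ) (hi : i ≠ n - 3 ∧ i ≠ n - 1 ∧ i ≠ n + 1) :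
    rhoRevComplWord n i ≤ n - 3 := by
  unfold rhoRevComplWord
  split_ifs with h
  · have := (rhoRevCompl_mem_Icc (n := n) (q := i + 1) (by omega) (by omega)).2; omega
  all_goals omega

theorem rhoRevComplWord_mem_Wset {n : ℕ} {β : ℝ} (hn : 4 ≤ n)
    (hβ : metallicMean ((n : ℝ) - 2) < β) : rhoRevComplWord n ∈ Wset β := by
  have hn' : (4 : ℝ) ≤ n := by exact_mod_cast hn
  have hβ' := (lt_metallicMean _).trans hβ
  have hfl := (sub_two_le_iff_le_floor (by omega)).mp hβ'.le
  refine mem_Wset_of_le (m := n - 2) (fun i => ?_) hfl fun hfl k hk => ?_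
  · by_cases h : i = n - 3 ∨ i = n - 1 ∨ i = n + 1
    · unfold rhoRevComplWord; split_ifs <;> omega
    · simp only [not_or] at h; have := rhoRevComplWord_le hn i h; omega
  have hA := one_lt_betaA_one (by rwa [cast_sub_two (by omega)]) hfl
  have hhead : shift k (rhoRevComplWord n) 0 = betaExp β 0 := by
    rw [shift_apply, zero_add, betaExp_zero, hfl, hk]
  have hk' : (k = n - 3 ∨ k = n - 1) ∨ k = n + 1 := by
    by_contra! h; have := rhoRevComplWord_le hn k ⟨h.1.1, h.1.2, h.2⟩; omega
  rcases hk' with hk' | hk'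
  · -- the maximal digit is followed by `0 < a_1`
    have ha1 : 1 ≤ betaExp β 1 := (Nat.one_le_floor_iff _).mpr hA.le
    refine lexLt_of_head_eq hhead (lexLt_of_head_lt ?_)
    simp only [shift_apply, zero_add]
    rcases hk' with hk' | hk' <;> rw [hk'] <;> unfold rhoRevComplWord <;> split_ifs <;> omega
  · refine lexLt_betaExp_of_one_lt_betaA_one (by linarith) hA hhead ?_ fun i hi => ?_
    · rw [shift_apply, hk']; unfold rhoRevComplWord; split_ifs <;> omega
    · rw [shift_apply, hk']; unfold rhoRevComplWord; split_ifs <;> omega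

theorem rhoRevComplWord_cases {n q : ℕ} (hq : q ∈ Icc 1 n) :
    (q ≤ n - 3 ∧ 2 ≤ rhoRevCompl n q ∧ rhoRevCompl n q ≤ n - 2 ∧
      rhoRevComplWord n (q - 1) = rhoRevCompl n q - 1) ∨
    (q = n - 2 ∧ rhoRevCompl n q = n - 1 ∧ rhoRevComplWord n (q - 1) = n - 2) ∨
    (q = n - 1 ∧ rhoRevCompl n q = 1 ∧ rhoRevComplWord n (q - 1) = 0) ∨
    (q = n ∧ rhoRevCompl n q = n ∧ rhoRevComplWord n (q - 1) = n - 2) := by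
  obtain ⟨hq1, hqn⟩ := hq
  rcases (show q ≤ n - 3 ∨ q = n - 2 ∨ q = n - 1 ∨ q = n by omega) with hq | hq | hq | hq
  · have := rhoRevCompl_mem_Icc hq1 hq
    refine Or.inl ⟨hq, this.1, this.2, ?_⟩
    unfold rhoRevComplWord; rw [if_pos (by omega), Nat.sub_add_cancel hq1]
  all_goals rw [hq]; unfold rhoRevComplWord rhoRevCompl rhoFun
  · exact Or.inr <| Or.inl ⟨rfl, by split_ifs <;> omega, by split_ifs <;> omega⟩
  · exact Or.inr <| Or.inr <| Or.inl ⟨rfl, by split_ifs <;> omega, by split_ifs <;> omega⟩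
  · exact Or.inr <| Or.inr <| Or.inr ⟨rfl, by split_ifs <;> omega, by split_ifs <;> omega⟩

theorem rhoRevComplWord_induces {n : ℕ} (hn : 4 ≤ n) :
    Induces n (rhoRevComplWord n) (rhoRevCompl n) := by
  refine induces_of_lexLt rhoRevCompl_injOn fun i hi j hj hlt => ?_
  have := rhoRevComplWord_cases hi
  have := rhoRevComplWord_cases hj
  by_cases hi2 : i = n - 2
  · -- the suffixes at `n - 2` and `n` first differ in their fourth letter
    obtain rfl : j = n := by omega
    rw [hi2]
    refine ⟨3, fun t ht => ?_, ?_⟩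
    · simp only [shift_apply]; interval_cases t <;> unfold rhoRevComplWord <;> split_ifs <;> omega
    · simp only [shift_apply]; unfold rhoRevComplWord; split_ifs <;> omega
  · refine lexLt_of_head_lt ?_
    simp only [shift_apply, zero_add]
    omega

def tauWord (n i : ℕ) : ℕ :=
  if i < n - 3 then tauFun n (i + 1) - 2 else if i = n - 3 then n - 2
  else if i = n - 2 then 1 else 0

theorem tauFun_injOn {n : ℕ} : InjOn (tauFun n) (Icc 1 n) := by
  rintro a ⟨ha1, ha⟩ b ⟨hb1, hb⟩ hab
  unfold tauFun at hab
  split_ifs at hab <;> omega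

theorem tauFun_mem_Icc {n q : ℕ} (hq1 : 1 ≤ q) (hq : q ≤ n - 3) : tauFun n q ∈ Icc 3 (n - 1) := by
  unfold tauFun; simp only [mem_Icc]; split_ifs <;> constructor <;> omega

theorem tauWord_le {n : ℕ} (hn : 4 ≤ n) (i : ℕ) (hi : i ≠ n - 3) : tauWord n i ≤ n - 3 := by
  unfold tauWord
  split_ifs with h
  · have := (tauFun_mem_Icc (n := n) (q := i + 1) (by omega) (by omega)).2; omega
  all_goals omega

theorem tauWord_mem_Wset {n : ℕ} {β : ℝ} (hn : 4 ≤ n) (hβ : metallicMean ((n : ℝ) - 2) < β) :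
    tauWord n ∈ Wset β := by
  have hn' : (4 : ℝ) ≤ n := by exact_mod_cast hn
  have hβ' := (lt_metallicMean _).trans hβ
  have hfl := (sub_two_le_iff_le_floor (by omega)).mp hβ'.le
  have hmax : tauWord n (n - 3) = n - 2 := by unfold tauWord; split_ifs <;> omega
  refine mem_Wset_of_le (m := n - 2) (fun i => ?_) hfl fun hfl k hk => ?_
  · rcases eq_or_ne i (n - 3) with rfl | hi
    · exact hmax.le
    · have := tauWord_le hn i hi; omega
  have hk : k = n - 3 := by
    by_contra hk'; have := tauWord_le hn k hk'; omega
  rw [hk]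
  refine lexLt_betaExp_of_one_lt_betaA_one (by linarith)
    (one_lt_betaA_one (by rwa [cast_sub_two (by omega)]) hfl) ?_ ?_ fun i hi => ?_
  · rw [shift_apply, zero_add, betaExp_zero, hfl, hmax]
  · rw [shift_apply]; unfold tauWord; split_ifs <;> omega
  · rw [shift_apply]; unfold tauWord; split_ifs <;> omega

theorem tauWord_cases {n q : ℕ} (hn : 4 ≤ n) (hq : q ∈ Icc 1 n) :
    (q ≤ n - 3 ∧ 3 ≤ tauFun n q ∧ tauFun n q ≤ n - 1 ∧
      tauWord n (q - 1) = tauFun n q - 2 ∧ 1 ≤ tauWord n q) ∨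
    (q = n - 2 ∧ tauFun n q = n ∧ tauWord n (q - 1) = n - 2) ∨
    (q = n - 1 ∧ tauFun n q = 2 ∧ tauWord n (q - 1) = 1 ∧ tauWord n q = 0) ∨
    (q = n ∧ tauFun n q = 1 ∧ tauWord n (q - 1) = 0) := by
  obtain ⟨hq1, hqn⟩ := hq
  rcases (show q ≤ n - 3 ∨ q = n - 2 ∨ q = n - 1 ∨ q = n by omega) with hq | hq | hq | hq
  · have := tauFun_mem_Icc hq1 hq
    refine Or.inl ⟨hq, this.1, this.2, ?_, ?_⟩
    · unfold tauWord; rw [if_pos (by omega), Nat.sub_add_cancel hq1]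
    · unfold tauWord
      split_ifs with h
      · have := (tauFun_mem_Icc (n := n) (q := q + 1) (by omega) (by omega)).1; omega
      all_goals omega
  all_goals rw [hq]; unfold tauWord tauFun
  · exact Or.inr <| Or.inl ⟨rfl, by split_ifs <;> omega, by split_ifs <;> omega⟩
  · exact Or.inr <| Or.inr <| Or.inl ⟨rfl, by split_ifs <;> omega, by split_ifs <;> omega,
      by split_ifs <;> omega⟩
  · exact Or.inr <| Or.inr <| Or.inr ⟨rfl, by split_ifs <;> omega, by split_ifs <;> omega⟩

theorem tauWord_induces {n : ℕ} (hn : 4 ≤ n) : Induces n (tauWord n) (tauFun n) :=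
  induces_of_two_letters tauFun_injOn fun i hi j hj _ => by
    have := tauWord_cases hn hi
    have := tauWord_cases hn hj
    omega

theorem Bperm_rhoRev {n : ℕ} (hn : 4 ≤ n) : Bperm n (rhoRev n) = n - 2 := by
  have : (4 : ℝ) ≤ n := by exact_mod_cast hn
  exact Bperm_eq_of_forall (by linarith) (fun _ _ h => sub_two_le_of_allowed_rhoRev hn h)
    fun _ hβ => ⟨rhoRevWord n, rhoRevWord_mem_Wset hn hβ, rhoRevWord_induces hn⟩

theorem Bperm_tauCompl {n : ℕ} (hn : 4 ≤ n) : Bperm n (tauCompl n) = n - 2 := by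
  have : (4 : ℝ) ≤ n := by exact_mod_cast hn
  exact Bperm_eq_of_forall (by linarith) (fun _ _ h => sub_two_le_of_allowed_tauCompl hn h)
    fun _ hβ => ⟨tauComplWord n, tauComplWord_mem_Wset hn hβ, tauComplWord_induces hn⟩

theorem Bperm_rhoRevCompl {n : ℕ} (hn : 4 ≤ n) :
    Bperm n (rhoRevCompl n) = metallicMean ((n : ℝ) - 2) := by
  have : (4 : ℝ) ≤ n := by exact_mod_cast hn
  exact Bperm_eq_of_forall (by linarith [lt_metallicMean ((n : ℝ) - 2)])
    (fun _ _ h => metallicMean_le_of_allowed_rhoRevCompl hn h)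
    fun _ hβ => ⟨rhoRevComplWord n, rhoRevComplWord_mem_Wset hn hβ, rhoRevComplWord_induces hn⟩

theorem Bperm_tauFun {n : ℕ} (hn : 4 ≤ n) : Bperm n (tauFun n) = metallicMean ((n : ℝ) - 2) := by
  have : (4 : ℝ) ≤ n := by exact_mod_cast hn
  exact Bperm_eq_of_forall (by linarith [lt_metallicMean ((n : ℝ) - 2)])
    (fun _ _ h => metallicMean_le_of_allowed_tauFun hn h)
    fun _ hβ => ⟨tauWord n, tauWord_mem_Wset hn hβ, tauWord_induces hn⟩

theorem stmt_9_general (n : ℕ) (hn : 4 ≤ n) (ρ τ ρR τC ρRC : ℕ → ℕ)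
    (hρ : IsRho n ρ) (hτ : IsTau n τ)
    (hρRdef : ∀ i ∈ Set.Icc 1 n, ρR i = ρ (n + 1 - i))
    (hτCdef : ∀ i ∈ Set.Icc 1 n, τC i = n + 1 - τ i)
    (hρRCdef : ∀ i ∈ Set.Icc 1 n, ρRC i = n + 1 - ρ (n + 1 - i)) :
    Bperm n ρR = (n : ℝ) - 2 ∧ Bperm n τC = (n : ℝ) - 2 ∧
      Bperm n ρRC = ((n : ℝ) - 2 + Real.sqrt (((n : ℝ) - 2) ^ 2 + 4)) / 2 ∧
      Bperm n τ = ((n : ℝ) - 2 + Real.sqrt (((n : ℝ) - 2) ^ 2 + 4)) / 2 := by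
  have hρrev : ∀ i ∈ Icc 1 n, ρ (n + 1 - i) = rhoFun n (n + 1 - i) :=
    fun i ⟨_, hin⟩ => hρ.eqOn ⟨by omega, by omega⟩
  refine ⟨?_, ?_, ?_, ?_⟩
  · rw [Bperm_congr (π' := rhoRev n) fun i hi => (hρRdef i hi).trans (hρrev i hi),
      Bperm_rhoRev hn]
  · rw [Bperm_congr (π' := tauCompl n) fun i hi => by rw [hτCdef i hi, hτ.eqOn hi]; rfl,
      Bperm_tauCompl hn]
  · rw [Bperm_congr (π' := rhoRevCompl n) fun i hi => by rw [hρRCdef i hi, hρrev i hi]; rfl,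
      Bperm_rhoRevCompl hn, metallicMean]
  · rw [Bperm_congr hτ.eqOn, Bperm_tauFun hn, metallicMean]

/-- Let `n ≥ 4`. Then `B(ρ^R) = B(τ^C) = n - 2` and
`B(ρ^{RC}) = B(τ) = (n - 2 + √((n-2)² + 4))/2`. -/
theorem stmt_9 (n : ℕ) (hn : 4 ≤ n) (ρ τ ρR τC ρRC : ℕ → ℕ)
    (hρ : IsRho n ρ) (hτ : IsTau n τ)
    (hρRperm : IsPerm n ρR) (hρRdef : ∀ i ∈ Set.Icc 1 n, ρR i = ρ (n + 1 - i))
    (hτCperm : IsPerm n τC) (hτCdef : ∀ i ∈ Set.Icc 1 n, τC i = n + 1 - τ i)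
    (hρRCperm : IsPerm n ρRC) (hρRCdef : ∀ i ∈ Set.Icc 1 n, ρRC i = n + 1 - ρ (n + 1 - i)) :
    Bperm n ρR = (n : ℝ) - 2 ∧ Bperm n τC = (n : ℝ) - 2 ∧
      Bperm n ρRC = ((n : ℝ) - 2 + Real.sqrt (((n : ℝ) - 2) ^ 2 + 4)) / 2 ∧
      Bperm n τ = ((n : ℝ) - 2 + Real.sqrt (((n : ℝ) - 2) ^ 2 + 4)) / 2 :=
  stmt_9_general n hn ρ τ ρR τC ρRC hρ hτ hρRdef hτCdef hρRCdef
end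

section
/- Let β and β' be real numbers with 1 < β ≤ β'. Then W(β) ⊆ W(β'). -/
/-!
If `β ≤ β'`, then at the first index `i` where the expansions of `β` and `β'` differ, the
remainders satisfy `A_i(β) ≤ A_i(β')`: inductively, equal digits leave equal fractional parts
`A_j - a_j ≥ 0`, which are then multiplied by `β ≤ β'`. Hence `a_i(β) < a_i(β')`, so the
β-expansion is lexicographically monotone in `β` and the condition `σ^k w < a` only weakens
as `β` grows.
-/

theorem lexLt_iff_toLex_lt {v w : ℕ → ℕ} : LexLt v w ↔ toLex v < toLex w := Iff.rfl

theorem betaA_nonneg {β : ℝ} (hβ : 0 ≤ β) : ∀ i, 0 ≤ betaA β i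
  | 0 => hβ
  | i + 1 => mul_nonneg hβ (sub_nonneg.2 (Nat.floor_le (betaA_nonneg hβ i)))

theorem betaA_le_betaA_of_betaExp_eq {β β' : ℝ} (hβ : 0 ≤ β) (hββ' : β ≤ β') :
    ∀ i, (∀ j < i, betaExp β j = betaExp β' j) → betaA β i ≤ betaA β' i
  | 0, _ => hββ'
  | i + 1, heq => by
      have ih := betaA_le_betaA_of_betaExp_eq hβ hββ' i fun j hj =>
        heq j (hj.trans i.lt_succ_self)
      have hfloor : (⌊betaA β i⌋₊ : ℝ) = ⌊betaA β' i⌋₊ :=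
        congrArg Nat.cast (heq i i.lt_succ_self)
      have hfract : 0 ≤ betaA β i - ⌊betaA β i⌋₊ :=
        sub_nonneg.2 (Nat.floor_le (betaA_nonneg hβ i))
      simp only [betaA]
      exact mul_le_mul hββ' (by linarith) hfract (hβ.trans hββ')

theorem toLex_betaExp_mono {β β' : ℝ} (hβ : 0 ≤ β) (hββ' : β ≤ β') :
    toLex (betaExp β) ≤ toLex (betaExp β') :=
  not_lt.1 fun ⟨i, hagree, hlt⟩ =>
    hlt.not_ge <| Nat.floor_mono <|
      betaA_le_betaA_of_betaExp_eq hβ hββ' i fun j hj => (hagree j hj).symm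

/-- If `1 < β ≤ β'`, then `W(β) ⊆ W(β')`. -/
theorem stmt_13 (β β' : ℝ) (hβ : 1 < β) (hββ' : β ≤ β') : Wset β ⊆ Wset β' := by
  rintro w ⟨hword, hlt⟩
  exact ⟨hword, fun k => lexLt_iff_toLex_lt.2 <|
    (lexLt_iff_toLex_lt.1 (hlt k)).trans_le (toLex_betaExp_mono (by linarith) hββ')⟩
end
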